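/- Under the linear herding model, suppose w̃_ℓ < 1 for all ℓ ≥ 2, so that ϕ_j > 0 for all j ≥ 0. Fix m ∈ 𝓜 and define the rescaled error β̂_{i,m} = (β_{i,m} − α_m)/ϕ_{i−1} for i ≥ 1. Then (β̂_{i,m})_{i≥1} is a martingale with respect to the filtration (𝓗_i)_{i≥1}: E[β̂_{i+1,m} | 𝓗_i] = β̂_{i,m} almost surely for every i ≥ 1. -/

import Mathlib

/-! Write `Xᵢ₊₁` for the indicator of `Rᵢ₊₁ = m`. Then
`βᵢ₊₁ − αₘ = (1 − w̃ᵢ₊₁)(βᵢ − αₘ) + w̃ᵢ₊₁ (Xᵢ₊₁ − αₘ)`, and the herding model says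
`E[Xᵢ₊₁ − αₘ | 𝓗ᵢ] = γᵢ (1 − ηᵢ)(βᵢ − αₘ)`. Hence
`E[βᵢ₊₁ − αₘ | 𝓗ᵢ] = (1 − w̃ᵢ₊₁ (1 − γᵢ + ηᵢ γᵢ)) (βᵢ − αₘ)`, and this factor is exactly
`ϕᵢ / ϕᵢ₋₁`; it is nonzero since `w̃ᵢ₊₁ < 1`, so dividing by `ϕᵢ` gives the martingale identity. -/

open MeasureTheory Filter

/-- Cumulative weight `∑_{j=1}^i w_j`. -/
noncomputable def Sw (w : ℕ → ℝ) (i : ℕ) : ℝ := ∑ j ∈ Finset.Icc 1 i, w j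

/-- Normalized weight `w̃_i = w_i / ∑_{j=1}^i w_j`. -/
noncomputable def wnorm (w : ℕ → ℝ) (i : ℕ) : ℝ := w i / Sw w i

/-- Historical collective opinion
`β_{i,m} = (∑_{j=1}^i w_j 1{R_j = m}) / (∑_{j=1}^i w_j)`. -/
noncomputable def betaH {Ω : Type*} (w : ℕ → ℝ) (R : ℕ → Ω → ℕ) (i m : ℕ) (ω : Ω) : ℝ :=
  (∑ j ∈ Finset.Icc 1 i, w j * (if R j ω = m then (1 : ℝ) else 0)) / Sw w i

/-- `𝓗_i`: the σ-algebra generated by `R_1, …, R_i` (trivial for `i = 0`). -/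
def Hsig {Ω : Type*} (R : ℕ → Ω → ℕ) (i : ℕ) : MeasurableSpace Ω :=
  ⨆ j ∈ Finset.Icc 1 i, MeasurableSpace.comap (R j) ⊤

/-- `ϕ_j = ∏_{ℓ=1}^j [1 − w̃_{ℓ+1} (1 − γ_ℓ + η_ℓ γ_ℓ)]` (with `ϕ_0 = 1`). -/
noncomputable def varphi (wt γ η : ℕ → ℝ) (j : ℕ) : ℝ :=
  ∏ ℓ ∈ Finset.Icc 1 j, (1 - wt (ℓ + 1) * (1 - γ ℓ + η ℓ * γ ℓ))

/-- Rescaled error `β̂_{i,m} = (β_{i,m} − α_m)/ϕ_{i−1}`. -/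
noncomputable def betaHat {Ω : Type*} (w γ η : ℕ → ℝ) (R : ℕ → Ω → ℕ) (α : ℕ → ℝ)
    (i m : ℕ) (ω : Ω) : ℝ :=
  (betaH w R i m ω - α m) / varphi (wnorm w) γ η (i - 1)

open Finset

lemma Sw_succ (w : ℕ → ℝ) (i : ℕ) : Sw w (i + 1) = Sw w i + w (i + 1) :=
  sum_Icc_succ_top (by omega) w

lemma Sw_pos {w : ℕ → ℝ} (hw : ∀ j, 0 ≤ w j) (hw1 : 0 < w 1) {i : ℕ} (hi : 1 ≤ i) :
    0 < Sw w i :=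
  hw1.trans_le (single_le_sum (fun j _ ↦ hw j) (mem_Icc.2 ⟨le_rfl, hi⟩))

lemma wnorm_nonneg {w : ℕ → ℝ} (hw : ∀ j, 0 ≤ w j) (i : ℕ) : 0 ≤ wnorm w i :=
  div_nonneg (hw i) (sum_nonneg fun j _ ↦ hw j)

lemma varphi_succ (wt γ η : ℕ → ℝ) (j : ℕ) :
    varphi wt γ η (j + 1) =
      varphi wt γ η j * (1 - wt (j + 1 + 1) * (1 - γ (j + 1) + η (j + 1) * γ (j + 1))) :=
  prod_Icc_succ_top (by omega) _

lemma herding_factor_pos {t g e : ℝ} (ht : 0 ≤ t) (ht1 : t < 1) (hg : 0 ≤ g) (he : e ≤ 1) :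
    0 < 1 - t * (1 - g + e * g) := by
  have : t * (1 - g + e * g) ≤ t := mul_le_of_le_one_right ht (by nlinarith)
  linarith

lemma betaH_succ {Ω : Type*} {w : ℕ → ℝ} (hw : ∀ j, 0 ≤ w j) (hw1 : 0 < w 1)
    (R : ℕ → Ω → ℕ) (m : ℕ) {i : ℕ} (hi : 1 ≤ i) (ω : Ω) :
    betaH w R (i + 1) m ω =
      (1 - wnorm w (i + 1)) * betaH w R i m ω
        + wnorm w (i + 1) * (if R (i + 1) ω = m then 1 else 0) := by
  have hS : Sw w i ≠ 0 := (Sw_pos hw hw1 hi).ne'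
  have hS' : Sw w i + w (i + 1) ≠ 0 := by
    rw [← Sw_succ]; exact (Sw_pos hw hw1 (by omega)).ne'
  simp only [betaH, wnorm, Sw_succ, sum_Icc_succ_top (show 1 ≤ i + 1 by omega)]
  field_simp
  ring

section Filtration

variable {Ω : Type*} {R : ℕ → Ω → ℕ}

lemma Hsig_le [mΩ : MeasurableSpace Ω] (hR : ∀ i, Measurable (R i)) (i : ℕ) : Hsig R i ≤ mΩ :=
  iSup₂_le fun j _ ↦ (hR j).comap_le

lemma measurable_Hsig {i j : ℕ} (hj : j ∈ Icc 1 i) : Measurable[Hsig R i] (R j) :=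
  Measurable.of_comap_le (le_iSup₂ (f := fun j _ ↦ MeasurableSpace.comap (R j) ⊤) j hj)

lemma measurable_ite_eq {_ : MeasurableSpace Ω} {f : Ω → ℕ} (hf : Measurable f) (m : ℕ) :
    Measurable fun ω ↦ if f ω = m then (1 : ℝ) else 0 :=
  (measurable_of_countable fun n : ℕ ↦ if n = m then (1 : ℝ) else 0).comp hf

lemma measurable_betaH (w : ℕ → ℝ) (i m : ℕ) : Measurable[Hsig R i] (betaH w R i m) :=
  (Finset.measurable_sum _ fun _ hj ↦
    (measurable_ite_eq (measurable_Hsig hj) m).const_mul _).div_const _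

lemma integrable_ite_eq [MeasurableSpace Ω] (μ : Measure Ω) [IsFiniteMeasure μ] {f : Ω → ℕ}
    (hf : Measurable f) (m : ℕ) : Integrable (fun ω ↦ if f ω = m then (1 : ℝ) else 0) μ :=
  .of_bound (measurable_ite_eq hf m).aestronglyMeasurable 1
    (.of_forall fun ω ↦ by split_ifs <;> simp)

lemma integrable_betaH [MeasurableSpace Ω] (μ : Measure Ω) [IsFiniteMeasure μ]
    (hR : ∀ i, Measurable (R i)) (w : ℕ → ℝ) (i m : ℕ) : Integrable (betaH w R i m) μ :=
  (integrable_finsetSum _ fun j _ ↦ (integrable_ite_eq μ (hR j) m).const_mul _).div_const _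

end Filtration

lemma condExp_betaH_succ_sub {Ω : Type*} [MeasurableSpace Ω] {μ : Measure Ω} [IsFiniteMeasure μ]
    {R : ℕ → Ω → ℕ} (hR : ∀ i, Measurable (R i)) {w : ℕ → ℝ} (hw : ∀ j, 0 ≤ w j)
    (hw1 : 0 < w 1) {i : ℕ} (hi : 1 ≤ i) {m : ℕ} {a g e : ℝ}
    (hmodel : μ[fun ω ↦ if R (i + 1) ω = m then (1 : ℝ) else 0 | Hsig R i]
      =ᵐ[μ] fun ω ↦ g * ((1 - e) * betaH w R i m ω + e * a) + (1 - g) * a) :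
    μ[fun ω ↦ betaH w R (i + 1) m ω - a | Hsig R i]
      =ᵐ[μ] fun ω ↦ (1 - wnorm w (i + 1) * (1 - g + e * g)) * (betaH w R i m ω - a) := by
  set t := wnorm w (i + 1)
  set X : Ω → ℝ := fun ω ↦ if R (i + 1) ω = m then 1 else 0
  set G : Ω → ℝ := fun ω ↦ (1 - t) * betaH w R i m ω - a
  have hsplit : (fun ω ↦ betaH w R (i + 1) m ω - a) = t • X + G := by
    funext ω
    simp only [Pi.add_apply, Pi.smul_apply, smul_eq_mul, X, G, betaH_succ hw hw1 R m hi ω, t]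
    ring
  have hGint : Integrable G μ := ((integrable_betaH μ hR w i m).const_mul _).sub (integrable_const a)
  have hG : μ[G | Hsig R i] = G := condExp_of_stronglyMeasurable (Hsig_le hR i)
    (((measurable_betaH w i m).const_mul _).sub_const _).stronglyMeasurable hGint
  rw [hsplit]
  filter_upwards [condExp_add ((integrable_ite_eq μ (hR _) m).smul t) hGint (Hsig R i),
    condExp_smul t X (Hsig R i), hmodel] with ω hadd hsmul hX
  rw [hadd, Pi.add_apply, hsmul, hG, Pi.smul_apply, hX, smul_eq_mul]
  ring

theorem stmt_14_general
    {Ω : Type*} [MeasurableSpace Ω] (μ : Measure Ω) [IsProbabilityMeasure μ]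
    (M : ℕ)
    (α : ℕ → ℝ)
    (R : ℕ → Ω → ℕ)
    (hRmeas : ∀ i, Measurable (R i))
    (w : ℕ → ℝ) (hw : ∀ j, 0 ≤ w j) (hw1 : 0 < w 1)
    (hwlt : ∀ ℓ : ℕ, 2 ≤ ℓ → wnorm w ℓ < 1)
    (γ : ℕ → ℝ) (hγ : ∀ i, γ i ∈ Set.Icc (0 : ℝ) 1)
    (η : ℕ → ℝ) (hη : ∀ i, η i ∈ Set.Icc (0 : ℝ) 1)
    -- linear herding model
    (hmodel : ∀ i : ℕ, 1 ≤ i → ∀ m ∈ Finset.Icc 1 M,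
      μ[(fun ω => if R (i + 1) ω = m then (1 : ℝ) else 0) | Hsig R i]
        =ᵐ[μ] fun ω =>
          γ i * ((1 - η i) * betaH w R i m ω + η i * α m) + (1 - γ i) * α m)
    (m : ℕ) (hm : m ∈ Finset.Icc 1 M) :
    ∀ i : ℕ, 1 ≤ i →
      μ[(fun ω => betaHat w γ η R α (i + 1) m ω) | Hsig R i]
        =ᵐ[μ] fun ω => betaHat w γ η R α i m ω := by
  intro i hi
  obtain ⟨k, rfl⟩ : ∃ k, i = k + 1 := ⟨i - 1, by omega⟩
  set c := 1 - wnorm w (k + 1 + 1) * (1 - γ (k + 1) + η (k + 1) * γ (k + 1))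
  have hc : c ≠ 0 := (herding_factor_pos (wnorm_nonneg hw _) (hwlt _ (by omega))
    (hγ _).1 (hη _).2).ne'
  have hβ : (fun ω ↦ betaHat w γ η R α (k + 1 + 1) m ω)
      = (varphi (wnorm w) γ η (k + 1))⁻¹ • fun ω ↦ betaH w R (k + 1 + 1) m ω - α m := by
    funext ω
    simp [betaHat, div_eq_inv_mul]
  rw [hβ]
  filter_upwards [condExp_smul (varphi (wnorm w) γ η (k + 1))⁻¹
      (fun ω ↦ betaH w R (k + 1 + 1) m ω - α m) (Hsig R (k + 1)),
    condExp_betaH_succ_sub hRmeas hw hw1 hi (hmodel _ hi m hm)] with ω hsmul hcond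
  rw [hsmul, Pi.smul_apply, hcond, smul_eq_mul, varphi_succ, betaHat, Nat.add_sub_cancel,
    div_eq_inv_mul, mul_inv, mul_assoc, inv_mul_cancel_left₀ hc]

/-- under the linear herding model with `w̃_ℓ < 1` for `ℓ ≥ 2`,
the rescaled error `β̂_{i,m} = (β_{i,m} − α_m)/ϕ_{i−1}` is a martingale with
respect to `(𝓗_i)_{i≥1}`: `E[β̂_{i+1,m} | 𝓗_i] = β̂_{i,m}` a.s. for all `i ≥ 1`. -/
theorem stmt_14
    {Ω : Type*} [MeasurableSpace Ω] (μ : Measure Ω) [IsProbabilityMeasure μ]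
    (M : ℕ) (hM : 1 ≤ M)
    (α : ℕ → ℝ) (hα : ∀ m ∈ Finset.Icc 1 M, α m ∈ Set.Icc (0 : ℝ) 1)
    (hα1 : ∑ m ∈ Finset.Icc 1 M, α m = 1)
    (R : ℕ → Ω → ℕ) (hRrange : ∀ i, 1 ≤ i → ∀ ω, R i ω ∈ Finset.Icc 1 M)
    (hRmeas : ∀ i, Measurable (R i))
    (w : ℕ → ℝ) (hw : ∀ j, 0 ≤ w j) (hw1 : 0 < w 1)
    (hwlt : ∀ ℓ : ℕ, 2 ≤ ℓ → wnorm w ℓ < 1)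
    (γ : ℕ → ℝ) (hγ : ∀ i, γ i ∈ Set.Icc (0 : ℝ) 1)
    (η : ℕ → ℝ) (hη : ∀ i, η i ∈ Set.Icc (0 : ℝ) 1)
    -- linear herding model
    (hmodel : ∀ i : ℕ, 1 ≤ i → ∀ m ∈ Finset.Icc 1 M,
      μ[(fun ω => if R (i + 1) ω = m then (1 : ℝ) else 0) | Hsig R i]
        =ᵐ[μ] fun ω =>
          γ i * ((1 - η i) * betaH w R i m ω + η i * α m) + (1 - γ i) * α m)
    (m : ℕ) (hm : m ∈ Finset.Icc 1 M) :
    ∀ i : ℕ, 1 ≤ i →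
      μ[(fun ω => betaHat w γ η R α (i + 1) m ω) | Hsig R i]
        =ᵐ[μ] fun ω => betaHat w γ η R α i m ω :=
  stmt_14_general μ M α R hRmeas w hw hw1 hwlt γ hγ η hη hmodel m hm
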